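/- Let Λ be an artin algebra and let 𝒞 be a full subcategory of maps(mod Λ) closed under isomorphisms. If 𝒞 is covariantly finite in maps(mod Λ), then the full subcategory Φ(𝒞) of mod(mod Λ) consisting of the functors isomorphic to Φ(Z) for some Z in 𝒞 is covariantly finite in mod(mod Λ). -/

import Mathlib

/-!
Φ is full: given `φ : Φ(X) ⟶ Φ(Z)`, the composite `(−, X₂) ⟶ Φ(X) ⟶ Φ(Z)` lifts along the
epimorphism `(−, Z₂) ⟶ Φ(Z)` to some `(−, h₂)` (Yoneda), and `X.hom ≫ h₂` then lies in the kernel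
of `(X₁, Z₂) ⟶ Φ(Z)(X₁)`, i.e. factors through `Z.hom` as `h₁ ≫ Z.hom`; so `φ = Φ(h₁, h₂)`.
A full functor carries a left `𝒞`-approximation `M ⟶ Z` to a left approximation of `Φ(M)` by the
isomorphism closure of `Φ(𝒞)`, and a finitely presented `F` is `Φ` of its presentation.
-/

open CategoryTheory CategoryTheory.Limits

universe u

/-- The functor `Φ : maps (mod Λ) → mod (mod Λ)` on objects: it sends `f : M₁ → M₂` to
`Coker((−,f) : (−,M₁) → (−,M₂))`. -/
noncomputable def PhiObj {Λ : Type u} [Ring Λ] (a : Arrow (FGModuleCat Λ)) :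
    (FGModuleCat Λ)ᵒᵖ ⥤ AddCommGrpCat.{u} :=
  cokernel (preadditiveYoneda.map a.hom)

/-- A functor `F : (mod Λ)ᵒᵖ → Ab` is finitely presented if there is an exact sequence
`(−,M₁) → (−,M₀) → F → 0`. -/
def IsFinitelyPresentedFunctor {Λ : Type u} [Ring Λ]
    (F : (FGModuleCat Λ)ᵒᵖ ⥤ AddCommGrpCat.{u}) : Prop :=
  ∃ (M₁ M₀ : FGModuleCat Λ) (f : M₁ ⟶ M₀) (p : preadditiveYoneda.obj M₀ ⟶ F)
    (w : preadditiveYoneda.map f ≫ p = 0),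
    Epi p ∧ (ShortComplex.mk (preadditiveYoneda.map f) p w).Exact

/-- The full subcategory `Φ(𝒞)`: objects isomorphic to `Φ(Z)` for some `Z ∈ 𝒞`. -/
noncomputable def PhiImage {Λ : Type u} [Ring Λ] (𝒞 : Set (Arrow (FGModuleCat Λ))) :
    Set ((FGModuleCat Λ)ᵒᵖ ⥤ AddCommGrpCat.{u}) :=
  {F | ∃ Z ∈ 𝒞, Nonempty (PhiObj Z ≅ F)}

/-- `f : M → Z` is a left `𝒳`-approximation of `M`. -/
def IsLeftApproximation {C : Type*} [Category C] (𝒳 : Set C) {M Z : C} (f : M ⟶ Z) : Prop :=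
  Z ∈ 𝒳 ∧ ∀ ⦃Z' : C⦄, Z' ∈ 𝒳 → ∀ u : M ⟶ Z', ∃ v : Z ⟶ Z', f ≫ v = u

/-- `M` has a left `𝒳`-approximation. -/
def HasLeftApproximation {C : Type*} [Category C] (𝒳 : Set C) (M : C) : Prop :=
  ∃ (Z : C) (f : M ⟶ Z), IsLeftApproximation 𝒳 f

open Opposite

universe v w

section Representable

variable {C : Type w} [Category.{v} C] [Preadditive C]

lemma preadditiveYoneda_obj_hom_ext {X : C} {G : Cᵒᵖ ⥤ AddCommGrpCat.{v}}
    {α β : preadditiveYoneda.obj X ⟶ G} (h : α.app (op X) (𝟙 X) = β.app (op X) (𝟙 X)) :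
    α = β := by
  ext ⟨Y⟩ (g : Y ⟶ X)
  have hg : (preadditiveYoneda.obj X).map g.op (𝟙 X) = g := Category.comp_id g
  have hα := α.naturality_apply g.op (𝟙 X)
  have hβ := β.naturality_apply g.op (𝟙 X)
  rw [hg] at hα hβ
  exact hα.trans (h ▸ hβ.symm)

lemma exists_preadditiveYoneda_map_comp_eq {X B : C} {H : Cᵒᵖ ⥤ AddCommGrpCat.{v}}
    (π : preadditiveYoneda.obj B ⟶ H) [Epi π] (η : preadditiveYoneda.obj X ⟶ H) :
    ∃ h : X ⟶ B, preadditiveYoneda.map h ≫ π = η := by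
  have hπ : Function.Surjective (π.app (op X)) :=
    (AddCommGrpCat.epi_iff_surjective _).1 inferInstance
  obtain ⟨h, hh⟩ := hπ (η.app (op X) (𝟙 X))
  refine ⟨h, preadditiveYoneda_obj_hom_ext ?_⟩
  have hh' : (preadditiveYoneda.map (h : X ⟶ B)).app (op X) (𝟙 X) = h := Category.id_comp h
  exact (congrArg (π.app (op X)) hh').trans hh

lemma exists_comp_eq_of_preadditiveYoneda_map_comp_cokernel_π_eq_zero {A B X : C} (f : A ⟶ B)
    (g : X ⟶ B) (hg : preadditiveYoneda.map g ≫ cokernel.π (preadditiveYoneda.map f) = 0) :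
    ∃ h : X ⟶ A, h ≫ f = g := by
  have hexact := (ShortComplex.exact_of_g_is_cokernel
    (ShortComplex.mk _ _ (cokernel.condition (preadditiveYoneda.map f)))
    (cokernelIsCokernel _)).map ((evaluation Cᵒᵖ AddCommGrpCat.{v}).obj (op X))
  rw [ShortComplex.ab_exact_iff] at hexact
  have hg' : (preadditiveYoneda.map g).app (op X) (𝟙 X) = g := Category.id_comp g
  have hzero := congr(($hg).app (op X) (𝟙 X))
  exact hexact g
    ((congrArg ((cokernel.π (preadditiveYoneda.map f)).app (op X)) hg').symm.trans hzero)

end Representable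

section Phi

variable (C : Type w) [Category.{v} C] [Preadditive C]

/-- The functor `Φ`; on `Arrow (FGModuleCat Λ)` its object map is `PhiObj` by definition. -/
noncomputable def cokernelPreadditiveYoneda : Arrow C ⥤ Cᵒᵖ ⥤ AddCommGrpCat.{v} where
  obj a := cokernel (preadditiveYoneda.map a.hom)
  map φ := cokernel.map _ _ (preadditiveYoneda.map φ.left) (preadditiveYoneda.map φ.right)
    (by simp only [← Functor.map_comp, Arrow.w])
  map_id _ := coequalizer.hom_ext (by simp)
  map_comp _ _ := coequalizer.hom_ext (by simp)

instance full_cokernelPreadditiveYoneda : (cokernelPreadditiveYoneda C).Full where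
  map_surjective {X Z} φ := by
    obtain ⟨h₂, hh₂⟩ := exists_preadditiveYoneda_map_comp_eq
      (cokernel.π (preadditiveYoneda.map Z.hom)) (cokernel.π _ ≫ φ)
    obtain ⟨h₁, hh₁⟩ := exists_comp_eq_of_preadditiveYoneda_map_comp_cokernel_π_eq_zero Z.hom
      (X.hom ≫ h₂) (by
        rw [Functor.map_comp, Category.assoc, hh₂]
        exact (cokernel.condition_assoc _ φ).trans zero_comp)
    exact ⟨Arrow.homMk h₁ h₂ hh₁,
      coequalizer.hom_ext (by simpa [cokernelPreadditiveYoneda] using hh₂)⟩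

end Phi

section Approximation

variable {C D : Type*} [Category C] [Category D] {𝒳 : Set C}

lemma IsLeftApproximation.iso_hom_comp {M M' Z : C} {f : M ⟶ Z} (hf : IsLeftApproximation 𝒳 f)
    (e : M' ≅ M) : IsLeftApproximation 𝒳 (e.hom ≫ f) := by
  refine ⟨hf.1, fun Z' hZ' u => ?_⟩
  obtain ⟨v, hv⟩ := hf.2 hZ' (e.inv ≫ u)
  exact ⟨v, by rw [Category.assoc, hv, e.hom_inv_id_assoc]⟩

lemma IsLeftApproximation.functor_map (F : C ⥤ D) [F.Full] {M Z : C} {f : M ⟶ Z}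
    (hf : IsLeftApproximation 𝒳 f) :
    IsLeftApproximation {Y | ∃ X ∈ 𝒳, Nonempty (F.obj X ≅ Y)} (F.map f) := by
  refine ⟨⟨Z, hf.1, ⟨Iso.refl _⟩⟩, ?_⟩
  rintro Y ⟨X, hX, ⟨e⟩⟩ u
  obtain ⟨v, hv⟩ := hf.2 hX (F.preimage (u ≫ e.inv))
  exact ⟨F.map v ≫ e.hom, by rw [← F.map_comp_assoc, hv, F.map_preimage, Category.assoc,
    e.inv_hom_id, Category.comp_id]⟩

end Approximation

theorem phiImage_covariantlyFinite_general
    {Λ : Type u} [Ring Λ]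
    (𝒞 : Set (Arrow (FGModuleCat Λ)))
    (hcf : ∀ M : Arrow (FGModuleCat Λ), HasLeftApproximation 𝒞 M) :
    ∀ F : (FGModuleCat Λ)ᵒᵖ ⥤ AddCommGrpCat.{u}, IsFinitelyPresentedFunctor F →
      HasLeftApproximation (PhiImage 𝒞) F := by
  rintro F ⟨M₁, M₀, f, p, w, hp, hexact⟩
  have e : PhiObj (Arrow.mk f) ≅ F :=
    IsColimit.coconePointUniqueUpToIso (cokernelIsCokernel _) hexact.gIsCokernel
  obtain ⟨Z, a, ha⟩ := hcf (Arrow.mk f)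
  exact ⟨_, _, (ha.functor_map (cokernelPreadditiveYoneda _)).iso_hom_comp e.symm⟩

/-- Let `Λ` be an artin algebra and `𝒞` a full subcategory of
`maps (mod Λ)` closed under isomorphisms.  If `𝒞` is covariantly finite in
`maps (mod Λ)`, then `Φ(𝒞)` is covariantly finite in `mod (mod Λ)`. -/
theorem phiImage_covariantlyFinite
    {R : Type u} [CommRing R] [IsArtinianRing R]
    {Λ : Type u} [Ring Λ] [Algebra R Λ] [Module.Finite R Λ]
    (𝒞 : Set (Arrow (FGModuleCat Λ)))
    (hiso : ∀ ⦃X Y : Arrow (FGModuleCat Λ)⦄, (X ≅ Y) → X ∈ 𝒞 → Y ∈ 𝒞)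
    (hcf : ∀ M : Arrow (FGModuleCat Λ), HasLeftApproximation 𝒞 M) :
    ∀ F : (FGModuleCat Λ)ᵒᵖ ⥤ AddCommGrpCat.{u}, IsFinitelyPresentedFunctor F →
      HasLeftApproximation (PhiImage 𝒞) F :=
  phiImage_covariantlyFinite_general 𝒞 hcf
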